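/- Let w = u·a·v·b·Sym(u)·b be an element of F_n, where u·a is the principal prefix of w. Then δ(u·a) = M, where M is the maximal value of δ over all prefixes of w (the maximal level of the path w), and δ(v) = 0. -/
import Mathlib


/-- The two-letter alphabet {a, b}. -/
inductive Letter : Type
  | a : Letter
  | b : Letter
deriving DecidableEq, BEq, Repr

/-- Words over the alphabet {a, b}. -/
abbrev Word := List Letter

/-- δ(w) = |w|_a − |w|_b. -/
def delta (w : Word) : ℤ := (w.count Letter.a : ℤ) - (w.count Letter.b : ℤ)

/-- A Dyck word: δ(w) = 0 and δ(p) ≥ 0 for every prefix p of w. -/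
def IsDyck (w : Word) : Prop := delta w = 0 ∧ ∀ p : Word, p <+: w → 0 ≤ delta p

/-- Membership in D_n: w = d·b with d a Dyck word of length 2n. -/
def InD (n : ℕ) (w : Word) : Prop :=
  ∃ d : Word, IsDyck d ∧ d.length = 2 * n ∧ w = d ++ [Letter.b]

/-- Exchanging the letters a and b. -/
def Letter.flip : Letter → Letter
  | .a => .b
  | .b => .a

/-- The complement w̄ of a word w. -/
def comp (w : Word) : Word := w.map Letter.flip

/-- Sym(w): the complement of the mirror (reversal) of w. -/
def sym (w : Word) : Word := comp w.reverse

/-- A palindrome: a word equal to its mirror. -/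
def Palindrome (w : Word) : Prop := w.reverse = w

/-- w' is a conjugate of w: w = u·v and w' = v·u. -/
def Conj (w w' : Word) : Prop := ∃ u v : Word, w = u ++ v ∧ w' = v ++ u

/-- u is the principal prefix of w: the shortest prefix of w with δ(u) maximal. -/
def IsPrincipalPrefix (u w : Word) : Prop :=
  u <+: w ∧ (∀ p : Word, p <+: w → delta p ≤ delta u) ∧
    (∀ p : Word, p <+: w → delta p = delta u → u.length ≤ p.length)

/-- The graph of the map γ: writing w = u·v·b with u the principal prefix of w,
    γ(w) = v̄·b·ū. -/
def GammaRel (w w' : Word) : Prop :=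
  ∃ u v : Word, IsPrincipalPrefix u w ∧ w = u ++ v ++ [Letter.b] ∧
    w' = comp v ++ [Letter.b] ++ comp u

/-- F_n: the fixed points of γ in D_n. -/
def InF (n : ℕ) (w : Word) : Prop := InD n w ∧ GammaRel w w

/-- F_γ = ⋃_{n ≥ 1} F_n. -/
def InFgamma (w : Word) : Prop := ∃ n : ℕ, 1 ≤ n ∧ InF n w

/-- x^y: concatenation of the word x with itself y times. -/
def wpow (x : Word) : ℕ → Word
  | 0 => []
  | k + 1 => x ++ wpow x k

lemma delta_append (x y : Word) : delta (x ++ y) = delta x + delta y := by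
  simp [delta, List.count_append]; ring

lemma count_flip (w : Word) (c : Letter) :
    (w.map Letter.flip).count c = w.count c.flip := by
  induction w with
  | nil => rfl
  | cons d t ih =>
    cases d <;> cases c <;>
      simp [List.count_cons, Letter.flip, ih] <;> rfl

lemma delta_comp (w : Word) : delta (comp w) = - delta w := by
  simp [delta, comp, count_flip, Letter.flip]

lemma delta_reverse (w : Word) : delta w.reverse = delta w := by
  simp [delta, List.count_reverse]

lemma delta_sym (w : Word) : delta (sym w) = - delta w := by
  rw [sym, delta_comp, delta_reverse]

lemma delta_a : delta [Letter.a] = 1 := by decide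
lemma delta_b : delta [Letter.b] = -1 := by decide

/-- Proposition (i): for w = u·a·v·b·Sym(u)·b ∈ F_n with u·a its principal
    prefix, δ(u·a) = M, the maximal level of w, and δ(v) = 0. -/
theorem prop_form_i (n : ℕ) (w u v : Word) (M : ℤ) (hw : InF n w)
    (hdec : w = u ++ [Letter.a] ++ v ++ [Letter.b] ++ sym u ++ [Letter.b])
    (hpp : IsPrincipalPrefix (u ++ [Letter.a]) w)
    (hM₁ : ∀ p : Word, p <+: w → delta p ≤ M)
    (hM₂ : ∃ p : Word, p <+: w ∧ delta p = M) :
    delta (u ++ [Letter.a]) = M ∧ delta v = 0 := by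
  obtain ⟨⟨d, hd, _, hwd⟩, _⟩ := hw
  have hwdelta : delta w = -1 := by
    rw [hwd, delta_append, hd.1, delta_b]; ring
  obtain ⟨p, hp, hpM⟩ := hM₂
  constructor
  · exact le_antisymm (hM₁ _ hpp.1) (hpM ▸ hpp.2.1 p hp)
  · have h2 := hwdelta
    rw [hdec] at h2
    simp only [delta_append, delta_sym, delta_a, delta_b] at h2
    linarith
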